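/- The map π₀ : D_ac(k₀,…,kₙ) → Emb(ℂ^{k₀}, ℂ^{k₁}) sending an acyclic complex to its first differential d⁰ is surjective onto injective linear maps, and each fiber is in bijection with D_ac(k₁-k₀, k₂,…,kₙ) (acyclic complexes on the quotient ℂ^{k₁}/im d⁰ ≅ ℂ^{k₁-k₀}). -/

import Mathlib

/-- The set `D_ac(k)` of acyclic cochain complexes `0 → ℂ^{k 0} → ℂ^{k 1} → ⋯`. -/
def Dac (k : ℕ → ℕ) : Type :=
  {d : ∀ q : ℕ, ((Fin (k q) → ℂ) →ₗ[ℂ] (Fin (k (q+1)) → ℂ)) //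
    (∀ q, (d (q+1)).comp (d q) = 0) ∧ LinearMap.ker (d 0) = ⊥ ∧
    (∀ q, LinearMap.ker (d (q+1)) = LinearMap.range (d q))}

/-!
Fix an injective `f : ℂ^{k₀} → ℂ^{k₁}`, a surjection `p : ℂ^{k₁} → ℂ^{k₁-k₀}` with kernel `im f`
and a section `s` of `p`. Complexes `C` with `d⁰ = f` correspond to complexes `D` on
`ℂ^{k₁-k₀}, ℂ^{k₂}, …` via `D⁰ = d¹ ∘ s` and `d¹ = D⁰ ∘ p`, all other differentials being shared:
since `ker d¹ = im f = ker p`, `d¹` factors through `p`, which makes the two constructions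
mutually inverse and carries acyclicity back and forth.

Surjectivity then only needs some acyclic complex with dimensions `(k₁-k₀, k₂, …)`. The
admissibility conditions say exactly that the alternating partial sums `aᵢ` of `k` are
nonnegative, vanish for `i = 0` and `i > n`, and satisfy `kᵢ = aᵢ + aᵢ₊₁`; the shifted dimension
vector splits in the same way, and every such split is realised by a direct sum of complexes
`0 → ℂ^{aᵢ₊₁} → ℂ^{aᵢ₊₁} → 0`.
-/

open LinearMap

namespace LinearMap

section

variable {R U V W : Type*} [Ring R] [AddCommGroup U] [AddCommGroup V] [AddCommGroup W]
  [Module R U] [Module R V] [Module R W] {p : V →ₗ[R] U} {s : U →ₗ[R] V} {g : V →ₗ[R] W}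

lemma comp_section_comp_of_ker_le (hps : p ∘ₗ s = LinearMap.id) (h : ker p ≤ ker g) :
    (g ∘ₗ s) ∘ₗ p = g := by
  ext x
  have hx : s (p x) - x ∈ ker g := h <| by
    simp [show p (s (p x)) = p x from congr($hps (p x))]
  simpa [sub_eq_zero] using hx

lemma range_comp_section_of_ker_le (hps : p ∘ₗ s = LinearMap.id) (h : ker p ≤ ker g) :
    range (g ∘ₗ s) = range g := by
  refine le_antisymm (range_comp_le_range s g) ?_
  conv_lhs => rw [← comp_section_comp_of_ker_le hps h]
  exact range_comp_le_range p _

lemma ker_comp_section_of_ker_eq (hps : p ∘ₗ s = LinearMap.id) (h : ker g = ker p) :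
    ker (g ∘ₗ s) = ⊥ := by
  rw [ker_comp, h, ← ker_comp, hps, ker_id]

end

lemma exists_section_ker_eq_range {K : Type*} [Field K] {a b : ℕ}
    (f : (Fin a → K) →ₗ[K] (Fin b → K)) (hf : Function.Injective f) :
    ∃ (p : (Fin b → K) →ₗ[K] (Fin (b - a) → K)) (s : (Fin (b - a) → K) →ₗ[K] (Fin b → K)),
      p ∘ₗ s = LinearMap.id ∧ ker p = range f := by
  have hdim : Module.finrank K ((Fin b → K) ⧸ range f) = Module.finrank K (Fin (b - a) → K) := by
    have := Submodule.finrank_quotient_add_finrank (range f)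
    rw [finrank_range_of_inj hf, Module.finrank_fin_fun, Module.finrank_fin_fun] at this
    rw [Module.finrank_fin_fun]
    omega
  let p := (LinearEquiv.ofFinrankEq _ _ hdim).toLinearMap ∘ₗ (range f).mkQ
  have hp : range p = ⊤ := by
    rw [range_comp, Submodule.range_mkQ, Submodule.map_top, LinearEquiv.range]
  obtain ⟨s, hps⟩ := exists_rightInverse_of_surjective p hp
  refine ⟨p, s, hps, ?_⟩
  rw [ker_comp, LinearEquiv.ker, Submodule.comap_bot, Submodule.ker_mkQ]

section ConjugateByEquiv

variable {R M M' N N' : Type*} [Semiring R] [AddCommMonoid M] [AddCommMonoid M']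
  [AddCommMonoid N] [AddCommMonoid N'] [Module R M] [Module R M'] [Module R N] [Module R N']

lemma ker_symm_comp_comp (e₁ : M ≃ₗ[R] M') (e₂ : N ≃ₗ[R] N') (δ : M' →ₗ[R] N') :
    ker (e₂.symm.toLinearMap ∘ₗ δ ∘ₗ e₁.toLinearMap) = (ker δ).comap e₁.toLinearMap := by
  rw [LinearEquiv.ker_comp, ker_comp]

lemma range_symm_comp_comp (e₁ : M ≃ₗ[R] M') (e₂ : N ≃ₗ[R] N') (δ : M' →ₗ[R] N') :
    range (e₂.symm.toLinearMap ∘ₗ δ ∘ₗ e₁.toLinearMap) = (range δ).map e₂.symm.toLinearMap := by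
  rw [range_comp, LinearEquiv.range_comp]

end ConjugateByEquiv

section InlCompSnd

variable (R A B C : Type*) [Semiring R] [AddCommMonoid A] [AddCommMonoid B] [AddCommMonoid C]
  [Module R A] [Module R B] [Module R C]

lemma ker_inl_comp_snd : ker (inl R B C ∘ₗ snd R A B) = range (inl R A B) := by
  rw [ker_comp_of_ker_eq_bot _ (ker_eq_bot_of_injective inl_injective), ker_snd]

lemma range_inl_comp_snd : range (inl R B C ∘ₗ snd R A B) = range (inl R B C) :=
  range_comp_of_range_eq_top _ (range_eq_top.2 snd_surjective)

end InlCompSnd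

end LinearMap

def quotientDims (k : ℕ → ℕ) : ℕ → ℕ := fun i => if i = 0 then k 1 - k 0 else k (i+1)

namespace Dac

variable {k : ℕ → ℕ}

theorem comp_eq_zero (C : Dac k) (q : ℕ) : C.1 (q+1) ∘ₗ C.1 q = 0 := C.2.1 q

theorem ker_eq_range (C : Dac k) (q : ℕ) : ker (C.1 (q+1)) = range (C.1 q) := C.2.2.2 q

noncomputable def descendFamily (C : Dac k) (s : (Fin (quotientDims k 0) → ℂ) →ₗ[ℂ] (Fin (k 1) → ℂ)) :
    ∀ q, (Fin (quotientDims k q) → ℂ) →ₗ[ℂ] (Fin (quotientDims k (q+1)) → ℂ)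
  | 0 => C.1 1 ∘ₗ s
  | q+1 => C.1 (q+2)

/-- The complex induced on `ℂ^{k₁} / im d⁰`, which `p` identifies with `ℂ^{k₁-k₀}`. -/
noncomputable def descend (C : Dac k) {p : (Fin (k 1) → ℂ) →ₗ[ℂ] (Fin (quotientDims k 0) → ℂ)}
    {s : (Fin (quotientDims k 0) → ℂ) →ₗ[ℂ] (Fin (k 1) → ℂ)} (hps : p ∘ₗ s = LinearMap.id)
    (hp : ker p = range (C.1 0)) : Dac (quotientDims k) := by
  refine ⟨descendFamily C s, fun q => ?_, ?_, fun q => ?_⟩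
  · match q with
    | 0 =>
      show C.1 2 ∘ₗ (C.1 1 ∘ₗ s) = 0
      rw [← comp_assoc, C.comp_eq_zero 1, zero_comp]
    | q+1 => exact C.comp_eq_zero (q+2)
  · exact ker_comp_section_of_ker_eq hps ((C.ker_eq_range 0).trans hp.symm)
  · match q with
    | 0 =>
      exact (C.ker_eq_range 1).trans
        (range_comp_section_of_ker_le hps (hp.trans (C.ker_eq_range 0).symm).le).symm
    | q+1 => exact C.ker_eq_range (q+2)

noncomputable def extendFamily (D : Dac (quotientDims k))
    (f : (Fin (k 0) → ℂ) →ₗ[ℂ] (Fin (k 1) → ℂ))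
    (p : (Fin (k 1) → ℂ) →ₗ[ℂ] (Fin (quotientDims k 0) → ℂ)) :
    ∀ q, (Fin (k q) → ℂ) →ₗ[ℂ] (Fin (k (q+1)) → ℂ)
  | 0 => f
  | 1 => D.1 0 ∘ₗ p
  | q+2 => D.1 (q+1)

noncomputable def extend (D : Dac (quotientDims k)) {f : (Fin (k 0) → ℂ) →ₗ[ℂ] (Fin (k 1) → ℂ)}
    (hf : Function.Injective f) {p : (Fin (k 1) → ℂ) →ₗ[ℂ] (Fin (quotientDims k 0) → ℂ)}
    (hp : Function.Surjective p) (hpf : ker p = range f) : Dac k := by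
  refine ⟨extendFamily D f p, fun q => ?_, ker_eq_bot.2 hf, fun q => ?_⟩
  · match q with
    | 0 =>
      show (D.1 0 ∘ₗ p) ∘ₗ f = 0
      rw [comp_assoc, range_le_ker_iff.1 hpf.ge, comp_zero]
    | 1 =>
      show D.1 1 ∘ₗ (D.1 0 ∘ₗ p) = 0
      rw [← comp_assoc, D.comp_eq_zero 0, zero_comp]
    | q+2 => exact D.comp_eq_zero (q+1)
  · match q with
    | 0 => exact (ker_comp_of_ker_eq_bot p D.2.2.1).trans hpf
    | 1 => exact (D.ker_eq_range 0).trans (range_comp_of_range_eq_top _ (range_eq_top.2 hp)).symm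
    | q+2 => exact D.ker_eq_range (q+1)

theorem nonempty_fiber_equiv (f : (Fin (k 0) → ℂ) →ₗ[ℂ] (Fin (k 1) → ℂ))
    (hf : Function.Injective f) : Nonempty ({C : Dac k // C.1 0 = f} ≃ Dac (quotientDims k)) := by
  obtain ⟨p, s, hps, hp⟩ : ∃ (p : (Fin (k 1) → ℂ) →ₗ[ℂ] (Fin (quotientDims k 0) → ℂ))
      (s : (Fin (quotientDims k 0) → ℂ) →ₗ[ℂ] (Fin (k 1) → ℂ)),
      p ∘ₗ s = LinearMap.id ∧ ker p = range f :=
    exists_section_ker_eq_range f hf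
  have hpsurj : Function.Surjective p := fun y => ⟨s y, congr($hps y)⟩
  refine ⟨{ toFun := fun C => C.1.descend hps (hp.trans (congrArg range C.2.symm))
            invFun := fun D => ⟨D.extend hf hpsurj hp, rfl⟩
            left_inv := ?_
            right_inv := ?_ }⟩
  · rintro ⟨C, rfl⟩
    refine Subtype.ext (Subtype.ext (funext fun q => ?_))
    match q with
    | 0 => rfl
    | 1 => exact comp_section_comp_of_ker_le hps (hp.trans (C.ker_eq_range 0).symm).le
    | q+2 => rfl
  · intro D
    refine Subtype.ext (funext fun q => ?_)
    match q with
    | 0 => exact (comp_assoc _ _ _).trans (by rw [hps, comp_id])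
    | q+1 => rfl

end Dac

/-- In an acyclic complex with dimensions `k`, `a i` is the rank of `dⁱ⁻¹`. -/
def IsRankSeq (k a : ℕ → ℕ) : Prop := a 0 = 0 ∧ ∀ i, k i = a i + a (i+1)

def altPartialSum (k : ℕ → ℕ) : ℕ → ℤ
  | 0 => 0
  | i+1 => k i - altPartialSum k i

lemma altPartialSum_succ_eq_sum (k : ℕ → ℕ) (i : ℕ) :
    altPartialSum k (i+1) = ∑ j ∈ Finset.range (i+1), (-1:ℤ)^(i+j) * (k j : ℤ) := by
  induction i with
  | zero => simp [altPartialSum]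
  | succ i ih =>
    rw [altPartialSum, ih, Finset.sum_range_succ _ (i+1), sub_eq_neg_add,
      ← Finset.sum_neg_distrib]
    congr 1
    · exact Finset.sum_congr rfl fun j _ => by ring
    · rw [← two_mul, pow_mul]; simp

section Admissible

variable {n : ℕ} {k : ℕ → ℕ} (hkn : ∀ q, n < q → k q = 0)
  (hsum : ∑ i ∈ Finset.range (n+1), (-1:ℤ)^i * (k i : ℤ) = 0)

include hkn hsum

lemma altPartialSum_eq_zero_of_lt : ∀ i, n < i → altPartialSum k i = 0 := by
  intro i hi
  induction i, hi using Nat.le_induction with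
  | base =>
    rw [altPartialSum_succ_eq_sum, ← mul_eq_zero_of_right ((-1:ℤ)^n) hsum, Finset.mul_sum]
    exact Finset.sum_congr rfl fun j _ => by ring
  | succ i hi ih => rw [altPartialSum, ih, hkn i hi]; simp

lemma altPartialSum_nonneg
    (hpos : ∀ i < n, 0 ≤ ∑ j ∈ Finset.range (i+1), (-1:ℤ)^(i+j) * (k j : ℤ)) :
    ∀ i, 0 ≤ altPartialSum k i
  | 0 => le_rfl
  | i+1 => by
    rcases lt_or_ge i n with hi | hi
    · rw [altPartialSum_succ_eq_sum]; exact hpos i hi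
    · rw [altPartialSum_eq_zero_of_lt hkn hsum (i+1) (by omega)]

lemma exists_isRankSeq_of_admissible
    (hpos : ∀ i < n, 0 ≤ ∑ j ∈ Finset.range (i+1), (-1:ℤ)^(i+j) * (k j : ℤ)) :
    ∃ a, IsRankSeq k a := by
  refine ⟨fun i => (altPartialSum k i).toNat, rfl, fun i => ?_⟩
  show k i = (altPartialSum k i).toNat + (altPartialSum k (i+1)).toNat
  have hrec : altPartialSum k (i+1) = k i - altPartialSum k i := rfl
  have := altPartialSum_nonneg hkn hsum hpos i
  have := altPartialSum_nonneg hkn hsum hpos (i+1)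
  omega

end Admissible

lemma IsRankSeq.quotientDims {k a : ℕ → ℕ} (h : IsRankSeq k a) :
    IsRankSeq (quotientDims k) (fun i => if i = 0 then 0 else a (i+1)) := by
  refine ⟨rfl, fun i => ?_⟩
  rcases i with _ | i <;> simp [_root_.quotientDims, h.1, h.2]

/-- The direct sum of the complexes `0 → ℂ^{aᵢ₊₁} → ℂ^{aᵢ₊₁} → 0` in degrees `i, i+1`. -/
theorem Dac.nonempty_of_isRankSeq {k a : ℕ → ℕ} (h : IsRankSeq k a) : Nonempty (Dac k) := by
  let E : ∀ i, (Fin (k i) → ℂ) ≃ₗ[ℂ] (Fin (a i) → ℂ) × (Fin (a (i+1)) → ℂ) := fun i =>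
    LinearEquiv.ofFinrankEq _ _ (by simp [h.2 i])
  let δ : ∀ i, (Fin (a i) → ℂ) × (Fin (a (i+1)) → ℂ) →ₗ[ℂ]
      (Fin (a (i+1)) → ℂ) × (Fin (a (i+2)) → ℂ) :=
    fun i => inl ℂ _ _ ∘ₗ snd ℂ _ _
  refine ⟨⟨fun q => (E (q+1)).symm.toLinearMap ∘ₗ δ q ∘ₗ (E q).toLinearMap,
    fun q => ?_, ?_, fun q => ?_⟩⟩
  · refine LinearMap.ext fun x => ?_
    simp [δ]
  · have : Subsingleton (Fin (a 0) → ℂ) := by rw [h.1]; infer_instance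
    rw [ker_symm_comp_comp, ker_inl_comp_snd, range_eq_bot.2 (Subsingleton.elim _ _),
      Submodule.comap_bot, LinearEquiv.ker]
  · rw [ker_symm_comp_comp, range_symm_comp_comp, Submodule.comap_equiv_eq_map_symm,
      ker_inl_comp_snd, range_inl_comp_snd]

/-- For admissible `k`, the map `π₀ : D_ac(k₀,…,kₙ) → Emb(ℂ^{k₀},ℂ^{k₁})`,
`C ↦ d⁰`, is surjective onto the injective linear maps, and each of its fibers is in
bijection with `D_ac(k₁-k₀, k₂,…,kₙ)`. -/
theorem statement14
    (n : ℕ) (k : ℕ → ℕ) (hkn : ∀ q, n < q → k q = 0)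
    (hadm : (∑ i ∈ Finset.range (n+1), (-1:ℤ)^i * (k i : ℤ) = 0) ∧
      ∀ i < n, 0 ≤ ∑ j ∈ Finset.range (i+1), (-1:ℤ)^(i+j) * (k j : ℤ)) :
    (∀ f : (Fin (k 0) → ℂ) →ₗ[ℂ] (Fin (k 1) → ℂ), Function.Injective f →
      ∃ C : Dac k, C.1 0 = f) ∧
    (∀ f : (Fin (k 0) → ℂ) →ₗ[ℂ] (Fin (k 1) → ℂ), Function.Injective f →
      Nonempty ({C : Dac k // C.1 0 = f} ≃
        Dac (fun i => if i = 0 then k 1 - k 0 else k (i+1)))) := by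
  obtain ⟨a, ha⟩ := exists_isRankSeq_of_admissible hkn hadm.1 hadm.2
  obtain ⟨D⟩ := Dac.nonempty_of_isRankSeq ha.quotientDims
  refine ⟨fun f hf => ?_, fun f hf => Dac.nonempty_fiber_equiv f hf⟩
  obtain ⟨e⟩ := Dac.nonempty_fiber_equiv f hf
  exact ⟨(e.symm D).1, (e.symm D).2⟩
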